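/- Let P be a DPAG that contains a directed mixed graph G, and suppose the edge between k and i in P has an arrowhead at i (k *→ i). Then there exists an inducing walk in G between k and i that is into i. Moreover, if k ↔ i in P, then there exists an inducing walk in G between k and i that is both into k and into i. -/
import Mathlib


namespace CausalGraphs

variable {V : Type*}

/-- A directed mixed graph (DMG): directed edges `dir` (`i → j`) and
bidirected edges `bi` (`i ↔ j`), with no self-loops. -/
structure DMG (V : Type*) where
  dir : V → V → Prop
  bi : V → V → Prop
  dir_irrefl : ∀ i, ¬ dir i i
  bi_irrefl : ∀ i, ¬ bi i i

namespace DMG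

/-- `G.Anc i j`: `i ∈ an(G, j)`, i.e. there is a (possibly trivial) directed path
from `i` to `j` in `G`. -/
def Anc (G : DMG V) (i j : V) : Prop :=
  Relation.ReflTransGen G.dir i j

/-- `G.Scc i j`: `i ∈ scc(G, j)`, i.e. `i` and `j` lie in the same strongly
connected component of `G`. -/
def Scc (G : DMG V) (i j : V) : Prop :=
  G.Anc i j ∧ G.Anc j i

/-- There is a bidirected edge between `i` and `j` (bidirected edges are unordered). -/
def BiEdge (G : DMG V) (i j : V) : Prop :=
  G.bi i j ∨ G.bi j i

/-- `G` has no directed cycle (i.e. `G` is an ADMG). -/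
def Acyclic (G : DMG V) : Prop :=
  ∀ i j, G.dir i j → ¬ G.Anc j i

end DMG

/-- A walk of length `len` is recorded by its vertices `vert 0, …, vert len` and,
for each edge index `k < len`, the edge marks: `intoL k` (resp. `intoR k`) is `true`
iff the `k`-th edge has an arrowhead at `vert k` (resp. at `vert (k+1)`). -/
structure Walk (V : Type*) where
  len : ℕ
  vert : ℕ → V
  intoL : ℕ → Bool
  intoR : ℕ → Bool

namespace Walk

def first (w : Walk V) : V := w.vert 0

def last (w : Walk V) : V := w.vert w.len

/-- The walk is an actual walk in a DMG `G`: each step traverses a directed edge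
(in either direction) or a bidirected edge of `G`, with the corresponding marks. -/
def ValidOn (G : DMG V) (w : Walk V) : Prop :=
  ∀ k, k < w.len →
    (w.intoL k = false ∧ w.intoR k = true ∧ G.dir (w.vert k) (w.vert (k+1))) ∨
    (w.intoL k = true ∧ w.intoR k = false ∧ G.dir (w.vert (k+1)) (w.vert k)) ∨
    (w.intoL k = true ∧ w.intoR k = true ∧ G.BiEdge (w.vert k) (w.vert (k+1)))

/-- `k` is a non-endpoint position of the walk. -/
def Interior (w : Walk V) (k : ℕ) : Prop := 0 < k ∧ k < w.len

/-- The non-endpoint node `vert k` is a collider on the walk: both adjacent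
edges have an arrowhead at it. -/
def ColliderAt (w : Walk V) (k : ℕ) : Prop :=
  w.Interior k ∧ w.intoR (k-1) = true ∧ w.intoL k = true

/-- The non-endpoint node `vert k` is a non-collider on the walk. -/
def NonColliderAt (w : Walk V) (k : ℕ) : Prop :=
  w.Interior k ∧ ¬ (w.intoR (k-1) = true ∧ w.intoL k = true)

/-- The edge on the first-endpoint side of position `k` is directed out of
`vert k`, pointing to the neighbour `vert (k-1)` on the walk. -/
def PointsLeft (w : Walk V) (k : ℕ) : Prop :=
  w.intoL (k-1) = true ∧ w.intoR (k-1) = false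

/-- The edge on the last-endpoint side of position `k` is directed out of
`vert k`, pointing to the neighbour `vert (k+1)` on the walk. -/
def PointsRight (w : Walk V) (k : ℕ) : Prop :=
  w.intoL k = false ∧ w.intoR k = true

/-- The walk is a path: all its vertices are distinct. -/
def IsPath (w : Walk V) : Prop :=
  ∀ a, a ≤ w.len → ∀ b, b ≤ w.len → w.vert a = w.vert b → a = b

/-- The walk is into its first node (arrowhead at the first node). -/
def IntoFirst (w : Walk V) : Prop := 0 < w.len ∧ w.intoL 0 = true

/-- The walk is into its last node (arrowhead at the last node). -/
def IntoLast (w : Walk V) : Prop := 0 < w.len ∧ w.intoR (w.len - 1) = true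

/-- The walk is σ-blocked by the set `C`. -/
def SigmaBlocked (G : DMG V) (w : Walk V) (C : Set V) : Prop :=
  w.first ∈ C ∨ w.last ∈ C ∨
  (∃ k, w.ColliderAt k ∧ ¬ ∃ c ∈ C, G.Anc (w.vert k) c) ∨
  (∃ k, w.NonColliderAt k ∧ w.vert k ∈ C ∧
    ((w.PointsLeft k ∧ ¬ G.Scc (w.vert k) (w.vert (k-1))) ∨
     (w.PointsRight k ∧ ¬ G.Scc (w.vert k) (w.vert (k+1)))))

/-- The walk is d-blocked by the set `C`. -/
def DBlocked (G : DMG V) (w : Walk V) (C : Set V) : Prop :=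
  w.first ∈ C ∨ w.last ∈ C ∨
  (∃ k, w.ColliderAt k ∧ ¬ ∃ c ∈ C, G.Anc (w.vert k) c) ∨
  (∃ k, w.NonColliderAt k ∧ w.vert k ∈ C)

/-- The walk is inducing: every collider on it is an ancestor of one of the two
endpoints, and every non-endpoint non-collider only has outgoing directed edges
to its neighbours on the walk that lie in the same strongly connected component. -/
def Inducing (G : DMG V) (w : Walk V) : Prop :=
  (∀ k, w.ColliderAt k → G.Anc (w.vert k) w.first ∨ G.Anc (w.vert k) w.last) ∧
  (∀ k, w.NonColliderAt k →
    (w.PointsLeft k → G.Scc (w.vert k) (w.vert (k-1))) ∧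
    (w.PointsRight k → G.Scc (w.vert k) (w.vert (k+1))))

end Walk

namespace DMG

/-- `A` and `B` are σ-separated given `C` in `G`. -/
def SigmaSep (G : DMG V) (A B C : Set V) : Prop :=
  ∀ w : Walk V, w.ValidOn G → w.first ∈ A → w.last ∈ B → w.SigmaBlocked G C

/-- `A` and `B` are d-separated given `C` in `G`. -/
def DSep (G : DMG V) (A B C : Set V) : Prop :=
  ∀ w : Walk V, w.ValidOn G → w.first ∈ A → w.last ∈ B → w.DBlocked G C

/-- Nodes `i` and `j` are σ-connected given `C` in `G`. -/
def SigmaConnected (G : DMG V) (i j : V) (C : Set V) : Prop :=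
  ∃ w : Walk V, w.ValidOn G ∧ w.first = i ∧ w.last = j ∧ ¬ w.SigmaBlocked G C

/-- The σ-independence model of `G`. -/
def IMsigma (G : DMG V) : Set (Set V × Set V × Set V) :=
  { t | G.SigmaSep t.1 t.2.1 t.2.2 }

/-- The d-independence model of `G`. -/
def IMd (G : DMG V) : Set (Set V × Set V × Set V) :=
  { t | G.DSep t.1 t.2.1 t.2.2 }

/-- There is an inducing walk between `i` and `j` in `G`. -/
def InducingWalk (G : DMG V) (i j : V) : Prop :=
  ∃ w : Walk V, w.ValidOn G ∧ w.first = i ∧ w.last = j ∧ w.Inducing G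

/-- There is an inducing path between `i` and `j` in `G`. -/
def InducingPath (G : DMG V) (i j : V) : Prop :=
  ∃ w : Walk V, w.ValidOn G ∧ w.first = i ∧ w.last = j ∧ w.IsPath ∧ w.Inducing G

/-- There is an inducing walk between `i` and `j` in `G` that is into `j`. -/
def InducingWalkIntoLast (G : DMG V) (i j : V) : Prop :=
  ∃ w : Walk V, w.ValidOn G ∧ w.first = i ∧ w.last = j ∧ w.Inducing G ∧ w.IntoLast

/-- There is an inducing walk between `i` and `j` in `G` that is into both `i` and `j`. -/
def InducingWalkIntoBoth (G : DMG V) (i j : V) : Prop :=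
  ∃ w : Walk V, w.ValidOn G ∧ w.first = i ∧ w.last = j ∧ w.Inducing G ∧ w.IntoFirst ∧ w.IntoLast

/-- `G'` is an acyclification of `G`. -/
def IsAcyclification (G G' : DMG V) : Prop :=
  G'.Acyclic ∧
  (∀ i j, ¬ G.Scc i j →
    ((G'.dir i j ↔ ∃ k, G.Scc k j ∧ G.dir i k) ∧
     (G'.bi i j ↔ ∃ k, G.Scc k j ∧ G.bi i k))) ∧
  (∀ i j, i ≠ j → G.Scc i j → (G'.dir i j ∨ G'.dir j i ∨ G'.bi i j))

end DMG

/-- Edge marks of a partial ancestral graph. -/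
inductive Mark : Type
  | tail
  | arrow
  | circle
deriving DecidableEq

/-- A directed partial ancestral graph (DPAG). `mark i j` is the edge mark at `j`
on the edge between `i` and `j` (only meaningful when `adj i j`). Allowed edge
types are `→`, `←`, `↔`, `∘→`, `←∘` and `∘—∘`; there are no directed and no
almost directed cycles. -/
structure DPAG (V : Type*) where
  adj : V → V → Prop
  mark : V → V → Mark
  adj_symm : ∀ i j, adj i j → adj j i
  adj_irrefl : ∀ i, ¬ adj i i
  tail_imp_arrow : ∀ i j, adj i j → mark j i = Mark.tail → mark i j = Mark.arrow
  no_directed_cycle : ∀ i, ¬ Relation.TransGen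
    (fun a b => adj a b ∧ mark a b = Mark.arrow ∧ mark b a = Mark.tail) i i
  no_almost_directed_cycle : ∀ i j, Relation.ReflTransGen
    (fun a b => adj a b ∧ mark a b = Mark.arrow ∧ mark b a = Mark.tail) i j →
    ¬ (adj i j ∧ mark i j = Mark.arrow ∧ mark j i = Mark.arrow)

/-- A directed edge `i → j` with respect to raw adjacency/mark data. -/
def DirEdgeOn (adj : V → V → Prop) (mark : V → V → Mark) (i j : V) : Prop :=
  adj i j ∧ mark i j = Mark.arrow ∧ mark j i = Mark.tail

/-- The directed edge `i → j` is definitely visible, with respect to raw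
adjacency/mark data: there is a node `k` not adjacent to `j` such that either
the edge between `k` and `i` is into `i`, or there is a path between `k` and `i`
that is into `i` on which every non-endpoint node is a collider and a parent of `j`. -/
def DefinitelyVisibleOn (adj : V → V → Prop) (mark : V → V → Mark) (i j : V) : Prop :=
  DirEdgeOn adj mark i j ∧
  ∃ k, ¬ adj k j ∧
    ((adj k i ∧ mark k i = Mark.arrow) ∨
     (∃ n, ∃ p : ℕ → V, 0 < n ∧ p 0 = k ∧ p n = i ∧
       (∀ a, a ≤ n → ∀ b, b ≤ n → p a = p b → a = b) ∧
       (∀ m, m < n → adj (p m) (p (m+1))) ∧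
       mark (p (n-1)) i = Mark.arrow ∧
       (∀ m, 0 < m → m < n →
         (mark (p (m-1)) (p m) = Mark.arrow ∧ mark (p (m+1)) (p m) = Mark.arrow) ∧
         DirEdgeOn adj mark (p m) j)))

namespace DPAG

/-- `i → j` in `P`. -/
def DirEdge (P : DPAG V) (i j : V) : Prop := DirEdgeOn P.adj P.mark i j

/-- `i ↔ j` in `P`. -/
def BiEdge (P : DPAG V) (i j : V) : Prop :=
  P.adj i j ∧ P.mark i j = Mark.arrow ∧ P.mark j i = Mark.arrow

/-- `i *→ j` in `P`: an edge between `i` and `j` with an arrowhead at `j`. -/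
def ArrowAt (P : DPAG V) (i j : V) : Prop := P.adj i j ∧ P.mark i j = Mark.arrow

/-- The directed edge `i → j` of `P` is definitely visible in `P`. -/
def DefinitelyVisible (P : DPAG V) (i j : V) : Prop :=
  DefinitelyVisibleOn P.adj P.mark i j

/-- The DPAG `P` contains the DMG `G`. -/
def Contains (P : DPAG V) (G : DMG V) : Prop :=
  (∀ i j, i ≠ j → (P.adj i j ↔ G.InducingPath i j)) ∧
  (∀ i j, P.ArrowAt i j → ¬ G.Anc j i) ∧
  (∀ i j, P.DirEdge i j → G.Anc i j)

/-- `p 0, …, p n` is a possibly directed path in `P`: consecutive vertices are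
adjacent, no edge has an arrowhead at the endpoint nearer `p 0`, and all
vertices are distinct. -/
def PossiblyDirectedPathOn (P : DPAG V) (n : ℕ) (p : ℕ → V) : Prop :=
  (∀ k, k < n → P.adj (p k) (p (k+1)) ∧ P.mark (p (k+1)) (p k) ≠ Mark.arrow) ∧
  (∀ a, a ≤ n → ∀ b, b ≤ n → p a = p b → a = b)

/-- The path `p 0, …, p n` is uncovered: every consecutive triple is unshielded. -/
def UncoveredOn (P : DPAG V) (n : ℕ) (p : ℕ → V) : Prop :=
  ∀ k, k + 2 ≤ n → ¬ P.adj (p k) (p (k+2))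

/-- There is a possibly directed path from `i` to `j` in `P`. -/
def PDPath (P : DPAG V) (i j : V) : Prop :=
  ∃ n, ∃ p : ℕ → V, p 0 = i ∧ p n = j ∧ P.PossiblyDirectedPathOn n p

end DPAG

/-- JCI Assumption 1 (exogeneity): no system variable causes any context variable
(`K` is the set of context nodes; its complement is the set of system nodes). -/
def JCI1 (G : DMG V) (K : Set V) : Prop :=
  ∀ i k, i ∉ K → k ∈ K → ¬ G.dir i k

/-- JCI Assumption 2 (randomization): no pair of a system and a context variable
is confounded. -/
def JCI2 (G : DMG V) (K : Set V) : Prop :=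
  ∀ i k, i ∉ K → k ∈ K → ¬ G.BiEdge i k

/-- JCI Assumption 3 (genericity): every pair of distinct context variables is
connected by a bidirected edge and by no directed edge. -/
def JCI3 (G : DMG V) (K : Set V) : Prop :=
  ∀ k k', k ∈ K → k' ∈ K → k ≠ k' → (G.bi k k' ∧ ¬ G.dir k k')

/-- An independence model on `V`: a set of triples of subsets of `V`. -/
abbrev IndepModel (V : Type*) := Set (Set V × Set V × Set V)

/-- Background knowledge `Ψ` is compatible with the acyclification. -/
def CompatibleWithAcyclification (Ψ : DMG V → Prop) : Prop :=
  ∀ G : DMG V, Ψ G →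
    (∃ G', G.IsAcyclification G' ∧ Ψ G') ∧
    (∀ i j : V, G.Anc i j → ∃ G', G.IsAcyclification G' ∧ Ψ G' ∧ G'.Anc i j) ∧
    (∀ i j : V, ¬ G.Anc i j → ∀ G', G.IsAcyclification G' → Ψ G' → ¬ G'.Anc i j)

namespace Walk

/-- Like `Inducing`, but colliders must be ancestors of the first node or of a
fixed node `i` (the eventual last node). -/
def AlmostInducing (G : DMG V) (w : Walk V) (i : V) : Prop :=
  (∀ t, w.ColliderAt t → G.Anc (w.vert t) w.first ∨ G.Anc (w.vert t) i) ∧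
  (∀ t, w.NonColliderAt t →
    (w.PointsLeft t → G.Scc (w.vert t) (w.vert (t-1))) ∧
    (w.PointsRight t → G.Scc (w.vert t) (w.vert (t+1))))

lemma inducing_of_almost {G : DMG V} {w : Walk V} {i : V}
    (h : w.AlmostInducing G i) (hl : w.last = i) : w.Inducing G := by
  refine ⟨fun t ht => ?_, h.2⟩
  rcases h.1 t ht with h1 | h1
  · exact Or.inl h1
  · exact Or.inr (hl ▸ h1)

lemma almost_of_inducing {G : DMG V} {w : Walk V}
    (h : w.Inducing G) : w.AlmostInducing G w.last := h

/-- Append one vertex at the end of a walk, via an edge out of the old last node. -/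
def snoc (w : Walk V) (y : V) : Walk V where
  len := w.len + 1
  vert := fun t => if t ≤ w.len then w.vert t else y
  intoL := fun e => if e < w.len then w.intoL e else false
  intoR := fun e => if e < w.len then w.intoR e else true

lemma snoc_len {w : Walk V} {y : V} : (w.snoc y).len = w.len + 1 := rfl

lemma snoc_vert {w : Walk V} {y : V} {t : ℕ} (h : t ≤ w.len) :
    (w.snoc y).vert t = w.vert t := if_pos h

lemma snoc_vert_last {w : Walk V} {y : V} :
    (w.snoc y).vert (w.len + 1) = y := if_neg (by omega)

lemma snoc_intoL {w : Walk V} {y : V} {e : ℕ} (h : e < w.len) :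
    (w.snoc y).intoL e = w.intoL e := if_pos h

lemma snoc_intoR {w : Walk V} {y : V} {e : ℕ} (h : e < w.len) :
    (w.snoc y).intoR e = w.intoR e := if_pos h

lemma snoc_intoL_last {w : Walk V} {y : V} :
    (w.snoc y).intoL w.len = false := if_neg (by omega)

lemma snoc_intoR_last {w : Walk V} {y : V} :
    (w.snoc y).intoR w.len = true := if_neg (by omega)

lemma snoc_first {w : Walk V} {y : V} : (w.snoc y).first = w.first :=
  snoc_vert (Nat.zero_le _)

lemma snoc_last {w : Walk V} {y : V} : (w.snoc y).last = y := snoc_vert_last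

lemma snoc_valid {G : DMG V} {w : Walk V} {y : V} (hv : w.ValidOn G)
    (hd : G.dir w.last y) : (w.snoc y).ValidOn G := by
  intro e he
  have he' : e < w.len + 1 := he
  rcases Nat.lt_or_ge e w.len with h | h
  · have h1 : e + 1 ≤ w.len := h
    rw [snoc_intoL h, snoc_intoR h, snoc_vert (le_of_lt h), snoc_vert h1]
    exact hv e h
  · have he2 : e = w.len := by omega
    subst he2
    left
    rw [snoc_intoL_last, snoc_intoR_last, snoc_vert le_rfl, snoc_vert_last]
    exact ⟨rfl, rfl, hd⟩

lemma snoc_almost {G : DMG V} {w : Walk V} {y i : V}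
    (ha : w.AlmostInducing G i)
    (hScc : G.Scc w.last y)
    (hL : 0 < w.len → w.intoL (w.len - 1) = true → w.intoR (w.len - 1) = false →
      G.Scc w.last (w.vert (w.len - 1))) :
    (w.snoc y).AlmostInducing G i := by
  constructor
  · intro t ht
    obtain ⟨⟨ht0, htlen⟩, hR, hLm⟩ := ht
    have htlen' : t < w.len + 1 := htlen
    have htw : t < w.len := by
      rcases Nat.lt_or_ge t w.len with hh | hh
      · exact hh
      · exfalso
        have hte : t = w.len := by omega
        subst hte
        rw [snoc_intoL_last] at hLm
        exact Bool.false_ne_true hLm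
    have ht1 : t - 1 < w.len := by omega
    rw [snoc_vert (le_of_lt htw), snoc_first]
    refine ha.1 t ⟨⟨ht0, htw⟩, ?_, ?_⟩
    · rw [← snoc_intoR (y := y) ht1]; exact hR
    · rw [← snoc_intoL (y := y) htw]; exact hLm
  · intro t ht
    obtain ⟨⟨ht0, htlen⟩, hnc⟩ := ht
    have htlen' : t < w.len + 1 := htlen
    rcases Nat.lt_or_ge t w.len with htw | htw
    · have ht1 : t - 1 < w.len := by omega
      have hnc' : w.NonColliderAt t := by
        refine ⟨⟨ht0, htw⟩, fun hx => hnc ?_⟩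
        rw [snoc_intoR (y := y) ht1, snoc_intoL (y := y) htw]
        exact hx
      have hind := ha.2 t hnc'
      constructor
      · intro hpl
        obtain ⟨a, b⟩ := hpl
        rw [snoc_intoL ht1] at a
        rw [snoc_intoR ht1] at b
        rw [snoc_vert (le_of_lt htw), snoc_vert (by omega : t - 1 ≤ w.len)]
        exact hind.1 ⟨a, b⟩
      · intro hpr
        obtain ⟨a, b⟩ := hpr
        rw [snoc_intoL htw] at a
        rw [snoc_intoR htw] at b
        rw [snoc_vert (le_of_lt htw), snoc_vert (by omega : t + 1 ≤ w.len)]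
        exact hind.2 ⟨a, b⟩
    · have hte : t = w.len := by omega
      have ht0' : 0 < w.len := by omega
      have ht1 : t - 1 < w.len := by omega
      constructor
      · intro hpl
        obtain ⟨a, b⟩ := hpl
        rw [snoc_intoL ht1] at a
        rw [snoc_intoR ht1] at b
        rw [hte] at a b
        rw [snoc_vert (by omega : t ≤ w.len), snoc_vert (by omega : t - 1 ≤ w.len), hte]
        exact hL ht0' a b
      · intro hpr
        rw [snoc_vert (by omega : t ≤ w.len), show t + 1 = w.len + 1 from by omega,
          snoc_vert_last, hte]
        exact hScc

/-- Truncate a walk to its first `n` edges. -/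
def trunc (w : Walk V) (n : ℕ) : Walk V := ⟨n, w.vert, w.intoL, w.intoR⟩

lemma trunc_valid {G : DMG V} {w : Walk V} {n : ℕ} (hv : w.ValidOn G)
    (hn : n ≤ w.len) : (w.trunc n).ValidOn G :=
  fun e he => hv e (lt_of_lt_of_le he hn)

lemma trunc_almost {G : DMG V} {w : Walk V} {n : ℕ} (hi : w.Inducing G)
    (hn : n ≤ w.len) : (w.trunc n).AlmostInducing G w.last := by
  constructor
  · intro t ht
    obtain ⟨⟨h0, h1⟩, hR, hLm⟩ := ht
    exact hi.1 t ⟨⟨h0, lt_of_lt_of_le h1 hn⟩, hR, hLm⟩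
  · intro t ht
    obtain ⟨⟨h0, h1⟩, hnc⟩ := ht
    exact hi.2 t ⟨⟨h0, lt_of_lt_of_le h1 hn⟩, hnc⟩

end Walk

namespace Walk

lemma cascade {G : DMG V} {w : Walk V} (hv : w.ValidOn G) (hi : w.Inducing G) :
    ∀ j, 0 < j → j < w.len → w.intoL j = true →
      G.Anc (w.vert j) w.first ∨ G.Anc (w.vert j) w.last := by
  intro j
  induction j using Nat.strong_induction_on with
  | _ j ih =>
    intro h0 hlen hmark
    by_cases hR : w.intoR (j - 1) = true
    · exact hi.1 j ⟨⟨h0, hlen⟩, hR, hmark⟩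
    · have hRf : w.intoR (j - 1) = false := by
        cases hb : w.intoR (j - 1)
        · rfl
        · exact absurd hb hR
      have hj1 : j - 1 < w.len := by omega
      rcases hv (j - 1) hj1 with ⟨_, hb, _⟩ | ⟨ha, hb, hd⟩ | ⟨_, hb, _⟩
      · rw [hRf] at hb; exact absurd hb (by simp)
      · have hnc : w.NonColliderAt j := by
          refine ⟨⟨h0, hlen⟩, fun hx => ?_⟩
          rw [hRf] at hx
          exact Bool.false_ne_true hx.1
        have hscc := (hi.2 j hnc).1 ⟨ha, hRf⟩
        have hanc : G.Anc (w.vert j) (w.vert (j - 1)) := hscc.1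
        rcases Nat.lt_or_ge 1 j with hj2 | hj2
        · rcases ih (j - 1) (by omega) (by omega) (by omega : j - 1 < w.len) ha with hc | hc
          · exact Or.inl (hanc.trans hc)
          · exact Or.inr (hanc.trans hc)
        · have : j = 1 := by omega
          subst this
          exact Or.inl hanc
      · rw [hRf] at hb; exact absurd hb (by simp)

lemma extend {G : DMG V} {i : V} :
    ∀ x : V, G.Anc x i →
      ∀ w : Walk V, w.ValidOn G → w.AlmostInducing G i → w.last = x →
        G.Anc i x → 0 < w.len → w.intoR (w.len - 1) = true →
        ∃ w' : Walk V, w'.ValidOn G ∧ w'.AlmostInducing G i ∧ w'.first = w.first ∧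
          w'.last = i ∧ w'.IntoLast ∧ w'.intoL 0 = w.intoL 0 := by
  intro x hx
  induction hx using Relation.ReflTransGen.head_induction_on with
  | refl =>
    intro w hv ha hl _ h0 hR
    exact ⟨w, hv, ha, rfl, hl, ⟨h0, hR⟩, rfl⟩
  | @head a c hac hci ih =>
    intro w hv ha hl hia h0 hR
    have hdac : G.dir w.last c := by rw [hl]; exact hac
    have hScc : G.Scc w.last c := by
      refine ⟨Relation.ReflTransGen.single hdac, ?_⟩
      rw [hl]
      exact hci.trans hia
    have hL : 0 < w.len → w.intoL (w.len - 1) = true → w.intoR (w.len - 1) = false →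
        G.Scc w.last (w.vert (w.len - 1)) := by
      intro _ _ h2
      rw [hR] at h2
      exact absurd h2 (by simp)
    obtain ⟨w', hv', ha', hf', hl', hil', h0'⟩ :=
      ih (w.snoc c) (snoc_valid hv hdac) (snoc_almost ha hScc hL) snoc_last
        (hia.trans (Relation.ReflTransGen.single hac)) (by exact Nat.succ_pos _)
        (by rw [show (w.snoc c).len - 1 = w.len from rfl]; exact snoc_intoR_last)
    refine ⟨w', hv', ha', ?_, hl', hil', ?_⟩
    · rw [hf', snoc_first]
    · rw [h0', snoc_intoL h0]

/-- Turn an inducing walk from `k` to `i` with `i ∉ an(G, k)` into an inducing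
walk from `k` to `i` that is into `i`, without changing the mark at `k`. -/
lemma intoLastFix {G : DMG V} {k i : V} (w : Walk V) (hv : w.ValidOn G)
    (hi : w.Inducing G) (hf : w.first = k) (hl : w.last = i) (hna : ¬ G.Anc i k) :
    ∃ w' : Walk V, w'.ValidOn G ∧ w'.Inducing G ∧ w'.first = k ∧ w'.last = i ∧
      w'.IntoLast ∧ (w.IntoFirst → w'.IntoFirst) := by
  have hlen0 : 0 < w.len := by
    by_contra h0
    have : w.len = 0 := by omega
    apply hna
    rw [← hf, ← hl, first, last, this]
    exact Relation.ReflTransGen.refl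
  by_cases hR : w.intoR (w.len - 1) = true
  · exact ⟨w, hv, hi, hf, hl, ⟨hlen0, hR⟩, fun h => h⟩
  · have hRf : w.intoR (w.len - 1) = false := by
      cases hb : w.intoR (w.len - 1)
      · rfl
      · exact absurd hb hR
    have hj1 : w.len - 1 < w.len := by omega
    rcases hv (w.len - 1) hj1 with ⟨_, hb, _⟩ | ⟨ha, hb, hd⟩ | ⟨_, hb, _⟩
    · rw [hRf] at hb; exact absurd hb (by simp)
    · -- last edge: i → m where m = w.vert (w.len - 1)
      rw [show w.len - 1 + 1 = w.len by omega] at hd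
      have hdm : G.dir i (w.vert (w.len - 1)) := by rw [← hl]; exact hd
      rcases Nat.lt_or_ge 1 w.len with hlen2 | hlen2
      · -- w.len ≥ 2
        rcases cascade hv hi (w.len - 1) (by omega) hj1 ha with hc | hc
        · exact absurd ((Relation.ReflTransGen.single hdm).trans (hf ▸ hc)) hna
        · -- m ∈ an(G, i)
          rw [hl] at hc
          rcases Relation.ReflTransGen.cases_head hc with hmi | ⟨c, hmc, hci⟩
          · exact absurd (hmi ▸ hdm) (G.dir_irrefl i)
          · set m := w.vert (w.len - 1) with hm
            have htr : (w.trunc (w.len - 1)).last = m := rfl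
            have hdtc : G.dir (w.trunc (w.len - 1)).last c := by rw [htr]; exact hmc
            have hScc : G.Scc (w.trunc (w.len - 1)).last c := by
              rw [htr]
              exact ⟨Relation.ReflTransGen.single hmc,
                hci.trans (Relation.ReflTransGen.single hdm)⟩
            have hta : (w.trunc (w.len - 1)).AlmostInducing G i :=
              hl ▸ trunc_almost hi (by omega)
            have hL : 0 < (w.trunc (w.len - 1)).len →
                (w.trunc (w.len - 1)).intoL ((w.trunc (w.len - 1)).len - 1) = true →
                (w.trunc (w.len - 1)).intoR ((w.trunc (w.len - 1)).len - 1) = false →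
                G.Scc (w.trunc (w.len - 1)).last
                  ((w.trunc (w.len - 1)).vert ((w.trunc (w.len - 1)).len - 1)) := by
              intro h1 h2 h3
              have h1' : 0 < w.len - 1 := h1
              have h2' : w.intoL (w.len - 1 - 1) = true := h2
              have h3' : w.intoR (w.len - 1 - 1) = false := h3
              have hnc : w.NonColliderAt (w.len - 1) := by
                refine ⟨⟨by omega, hj1⟩, fun hx => ?_⟩
                rw [h3'] at hx
                exact Bool.false_ne_true hx.1
              exact (hi.2 (w.len - 1) hnc).1 ⟨h2', h3'⟩
            set w1 := (w.trunc (w.len - 1)).snoc c with hw1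
            obtain ⟨w', hv', ha', hf', hl', hil', h0'⟩ :=
              extend c hci w1 (snoc_valid (trunc_valid hv (by omega)) hdtc)
                (snoc_almost hta hScc hL) snoc_last
                ((Relation.ReflTransGen.single hdm).trans
                  (Relation.ReflTransGen.single hmc))
                (by exact Nat.succ_pos _)
                (by rw [show w1.len - 1 = (w.trunc (w.len - 1)).len from rfl]
                    exact snoc_intoR_last)
            refine ⟨w', hv', inducing_of_almost ha' hl', ?_, hl', hil', ?_⟩
            · rw [hf', hw1, snoc_first, ← hf]; rfl
            · intro hif
              have hpos : 0 < (w.trunc (w.len - 1)).len := by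
                show 0 < w.len - 1; omega
              refine ⟨hil'.1, ?_⟩
              rw [h0', hw1, snoc_intoL hpos]
              exact hif.2
      · -- w.len = 1 : the edge is i → k, contradiction
        exfalso
        apply hna
        have : w.len - 1 = 0 := by omega
        rw [this] at hdm
        rw [← hf]
        exact Relation.ReflTransGen.single hdm
    · rw [hRf] at hb; exact absurd hb (by simp)

end Walk

namespace Walk

/-- The reversal of a walk. -/
def reverse (w : Walk V) : Walk V where
  len := w.len
  vert := fun t => w.vert (w.len - t)
  intoL := fun e => w.intoR (w.len - 1 - e)
  intoR := fun e => w.intoL (w.len - 1 - e)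

lemma reverse_len {w : Walk V} : w.reverse.len = w.len := rfl

lemma reverse_first {w : Walk V} : w.reverse.first = w.last := rfl

lemma reverse_last {w : Walk V} : w.reverse.last = w.first := by
  show w.vert (w.len - w.len) = w.vert 0
  rw [Nat.sub_self]

lemma reverse_intoFirst {w : Walk V} (h : w.IntoLast) : w.reverse.IntoFirst := by
  refine ⟨h.1, ?_⟩
  show w.intoR (w.len - 1 - 0) = true
  rw [Nat.sub_zero]
  exact h.2

lemma reverse_intoLast {w : Walk V} (h : w.IntoFirst) : w.reverse.IntoLast := by
  refine ⟨h.1, ?_⟩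
  show w.intoL (w.len - 1 - (w.len - 1)) = true
  rw [Nat.sub_self]
  exact h.2

lemma reverse_valid {G : DMG V} {w : Walk V} (hv : w.ValidOn G) :
    w.reverse.ValidOn G := by
  intro e he
  have he' : e < w.len := he
  have hf : w.len - 1 - e < w.len := by omega
  have e1 : w.len - e = (w.len - 1 - e) + 1 := by omega
  have e2 : w.len - (e + 1) = w.len - 1 - e := by omega
  have gl : w.reverse.intoL e = w.intoR (w.len - 1 - e) := rfl
  have gr : w.reverse.intoR e = w.intoL (w.len - 1 - e) := rfl
  have gv1 : w.reverse.vert e = w.vert ((w.len - 1 - e) + 1) := by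
    show w.vert (w.len - e) = _; rw [e1]
  have gv2 : w.reverse.vert (e + 1) = w.vert (w.len - 1 - e) := by
    show w.vert (w.len - (e + 1)) = _; rw [e2]
  rcases hv (w.len - 1 - e) hf with ⟨h1, h2, h3⟩ | ⟨h1, h2, h3⟩ | ⟨h1, h2, h3⟩
  · right; left; rw [gl, gr, gv1, gv2]; exact ⟨h2, h1, h3⟩
  · left; rw [gl, gr, gv1, gv2]; exact ⟨h2, h1, h3⟩
  · right; right; rw [gl, gr, gv1, gv2]; exact ⟨h2, h1, h3.symm⟩

lemma reverse_inducing {G : DMG V} {w : Walk V} (hv : w.ValidOn G)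
    (hi : w.Inducing G) : w.reverse.Inducing G := by
  constructor
  · intro t ht
    obtain ⟨⟨h0, h1⟩, hR, hLm⟩ := ht
    have h1' : t < w.len := h1
    have e1 : w.len - 1 - (t - 1) = w.len - t := by omega
    have e2 : w.len - 1 - t = (w.len - t) - 1 := by omega
    have hR' : w.intoL (w.len - t) = true := by
      have : w.reverse.intoR (t - 1) = w.intoL (w.len - t) := by
        show w.intoL (w.len - 1 - (t - 1)) = _; rw [e1]
      rw [← this]; exact hR
    have hL' : w.intoR ((w.len - t) - 1) = true := by
      have : w.reverse.intoL t = w.intoR ((w.len - t) - 1) := by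
        show w.intoR (w.len - 1 - t) = _; rw [e2]
      rw [← this]; exact hLm
    have hcol : w.ColliderAt (w.len - t) := ⟨⟨by omega, by omega⟩, hL', hR'⟩
    have hvert : w.reverse.vert t = w.vert (w.len - t) := rfl
    rw [hvert, reverse_first, reverse_last]
    exact (hi.1 (w.len - t) hcol).symm
  · intro t ht
    obtain ⟨⟨h0, h1⟩, hnc⟩ := ht
    have h1' : t < w.len := h1
    have e1 : w.len - 1 - (t - 1) = w.len - t := by omega
    have e2 : w.len - 1 - t = (w.len - t) - 1 := by omega
    have grt : w.reverse.intoR (t - 1) = w.intoL (w.len - t) := by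
      show w.intoL (w.len - 1 - (t - 1)) = _; rw [e1]
    have glt : w.reverse.intoL t = w.intoR ((w.len - t) - 1) := by
      show w.intoR (w.len - 1 - t) = _; rw [e2]
    have glt1 : w.reverse.intoL (t - 1) = w.intoR (w.len - t) := by
      show w.intoR (w.len - 1 - (t - 1)) = _; rw [e1]
    have grt1 : w.reverse.intoR t = w.intoL ((w.len - t) - 1) := by
      show w.intoL (w.len - 1 - t) = _; rw [e2]
    have hnc' : w.NonColliderAt (w.len - t) := by
      refine ⟨⟨by omega, by omega⟩, fun hx => hnc ?_⟩
      exact ⟨by rw [grt]; exact hx.2, by rw [glt]; exact hx.1⟩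
    have hind := hi.2 (w.len - t) hnc'
    have hvert : w.reverse.vert t = w.vert (w.len - t) := rfl
    constructor
    · intro hpl
      obtain ⟨a, b⟩ := hpl
      rw [glt1] at a
      rw [grt] at b
      have hv1 : w.reverse.vert (t - 1) = w.vert ((w.len - t) + 1) := by
        show w.vert (w.len - (t - 1)) = _
        rw [show w.len - (t - 1) = (w.len - t) + 1 by omega]
      rw [hvert, hv1]
      exact hind.2 ⟨b, a⟩
    · intro hpr
      obtain ⟨a, b⟩ := hpr
      rw [glt] at a
      rw [grt1] at b
      have hv1 : w.reverse.vert (t + 1) = w.vert ((w.len - t) - 1) := by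
        show w.vert (w.len - (t + 1)) = _
        rw [show w.len - (t + 1) = (w.len - t) - 1 by omega]
      rw [hvert, hv1]
      exact hind.1 ⟨b, a⟩

end Walk

/-- if a DPAG `P` contains the DMG `G` and the edge between `k` and
`i` in `P` has an arrowhead at `i`, then there is an inducing walk in `G` between
`k` and `i` that is into `i`; if moreover `k ↔ i` in `P`, then there is an
inducing walk in `G` between `k` and `i` into both `k` and `i`. -/
theorem statement8 (G : DMG V) (P : DPAG V) (hPG : P.Contains G)
    (k i : V) (h : P.ArrowAt k i) :
    G.InducingWalkIntoLast k i ∧ (P.BiEdge k i → G.InducingWalkIntoBoth k i) := by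
  obtain ⟨hadj, harr, hdirr⟩ := hPG
  have hki : k ≠ i := fun he => P.adj_irrefl i (he ▸ h.1)
  obtain ⟨w, hv, hf, hl, _, hind⟩ := (hadj k i hki).mp h.1
  have hnik : ¬ G.Anc i k := harr k i h
  obtain ⟨w1, hv1, hi1, hf1, hl1, hil1, _⟩ := Walk.intoLastFix w hv hind hf hl hnik
  constructor
  · exact ⟨w1, hv1, hf1, hl1, hi1, hil1⟩
  · intro hbi
    have hnki : ¬ G.Anc k i := harr i k ⟨P.adj_symm _ _ h.1, hbi.2.2⟩
    obtain ⟨w2, hv2, hi2, hf2, hl2, hil2, hif2⟩ :=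
      Walk.intoLastFix w1.reverse (Walk.reverse_valid hv1)
        (Walk.reverse_inducing hv1 hi1)
        (by rw [Walk.reverse_first, hl1]) (by rw [Walk.reverse_last, hf1]) hnki
    have hw2if : w2.IntoFirst := hif2 (Walk.reverse_intoFirst hil1)
    exact ⟨w2.reverse, Walk.reverse_valid hv2,
      by rw [Walk.reverse_first, hl2], by rw [Walk.reverse_last, hf2],
      Walk.reverse_inducing hv2 hi2,
      Walk.reverse_intoFirst hil2, Walk.reverse_intoLast hw2if⟩

end CausalGraphs
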